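/- arXiv:2502.05511 — 2 statements merged into one kernel-verified Lean document; each statement's English description precedes it below -/
import Mathlib

section
/- Let 0 ≤ ε < 1/2 and let A be an online paging policy such that at every cache miss with most recent request s, A evicts a page drawn from a distribution μ on its current cache satisfying Σ_{p} μ(p)·α(p<q|s) ≤ 1/(2(1−ε)) for every page q of the current cache. Then A is (2−2ε)/(1−2ε)-competitive: for every online paging policy B started from the same initial cache and every horizon T, E[cost(A, T)] ≤ ((2−2ε)/(1−2ε)) · E[cost(B, T)]. -/
open Finset

/-! ## The Markov paging model

Pages are `Fin n`.  Requests are drawn from a time-homogeneous Markov chain with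
row-stochastic transition matrix `M` and a fixed initial distribution `init`.
An online paging policy is given by its (randomized) eviction rule: on a cache miss,
`pol hist cache p` is the probability of evicting page `p`, where `hist` is the list
of requests seen so far (most recent first, the current — missed — request at the head)
and `cache` is the current cache. -/

/-- A (randomized) online paging policy: given the request history (most recent first,
the current request at the head) and the current cache, the probability of evicting
each page. -/
abbrev Policy (n : ℕ) := List (Fin n) → Finset (Fin n) → Fin n → ℝ

/-- `M` is a row-stochastic transition matrix. -/
def IsStochastic {n : ℕ} (M : Fin n → Fin n → ℝ) : Prop :=
  ∀ i, (∀ j, 0 ≤ M i j) ∧ (∑ j, M i j) = 1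

/-- `μ` is a probability distribution on the pages. -/
def IsDist {n : ℕ} (μ : Fin n → ℝ) : Prop :=
  (∀ i, 0 ≤ μ i) ∧ (∑ i, μ i) = 1

/-- Validity of a policy for cache size `k`: on any (size-`k`) cache, the eviction rule
is a probability distribution supported on the cache. -/
def IsPolicy {n : ℕ} (k : ℕ) (pol : Policy n) : Prop :=
  ∀ (hist : List (Fin n)) (cache : Finset (Fin n)), cache.card = k →
    (∀ p, 0 ≤ pol hist cache p) ∧ (∀ p, p ∉ cache → pol hist cache p = 0) ∧
      (∑ p ∈ cache, pol hist cache p) = 1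

/-- Expected number of misses of policy `pol` on the next `T` requests, where the next
request is drawn from `dist`, the history so far is `hist` and the current cache is
`cache`.  On a hit the cache is unchanged; on a miss the policy pays `1`, evicts a page
`p` with probability `pol (x :: hist) cache p` and brings the requested page in. -/
noncomputable def runAux {n : ℕ} (M : Fin n → Fin n → ℝ) (pol : Policy n) :
    ℕ → (Fin n → ℝ) → List (Fin n) → Finset (Fin n) → ℝ
  | 0, _, _, _ => 0
  | T + 1, dist, hist, cache =>
      ∑ x : Fin n, dist x *
        (if x ∈ cache then runAux M pol T (M x) (x :: hist) cache
         else 1 + ∑ p ∈ cache, pol (x :: hist) cache p *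
              runAux M pol T (M x) (x :: hist) (insert x (cache.erase p)))

/-- `E[cost(pol, T)]`: the expected number of cache misses of policy `pol` during the
first `T` requests of the Markov chain `(M, init)`, starting from cache `cache`. -/
noncomputable def expCost {n : ℕ} (M : Fin n → Fin n → ℝ) (init : Fin n → ℝ)
    (pol : Policy n) (cache : Finset (Fin n)) (T : ℕ) : ℝ :=
  runAux M pol T init [] cache

/-- Probability that, within the next `T` steps of the chain currently at `s`, page `p`
is requested strictly before page `q` (a request to `q` — in particular `p = q` — stops
the process with failure). -/
noncomputable def alphaAux {n : ℕ} (M : Fin n → Fin n → ℝ) (p q : Fin n) :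
    ℕ → Fin n → ℝ
  | 0, _ => 0
  | T + 1, s =>
      ∑ x : Fin n, M s x *
        (if x = q then 0 else if x = p then 1 else alphaAux M p q T x)

/-- `α(p<q|s)`: the probability that, for the chain started at `s`, the first subsequent
request to `p` occurs strictly before the first subsequent request to `q`; in particular
`α(p<p|s) = 0`. -/
noncomputable def alphaProb {n : ℕ} (M : Fin n → Fin n → ℝ) (p q s : Fin n) : ℝ :=
  ⨆ T : ℕ, alphaAux M p q T s

/-- An approximately dominating policy (multiplicative error `ε`): a valid policy
which, at every cache miss with most recent request `s`, evicts a page drawn from a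
distribution `μ` on its current cache satisfying
`∑ p, μ p · α(p<q|s) ≤ 1/(2(1−ε))` for every page `q` of the cache. -/
def IsMulApproxDomPolicy {n : ℕ} (k : ℕ) (M : Fin n → Fin n → ℝ) (pol : Policy n)
    (ε : ℝ) : Prop :=
  IsPolicy k pol ∧
    ∀ (s : Fin n) (hist : List (Fin n)) (cache : Finset (Fin n)),
      cache.card = k → s ∉ cache →
        ∀ q ∈ cache,
          (∑ p ∈ cache, pol (s :: hist) cache p * alphaProb M p q s) ≤ 1 / (2 * (1 - ε))




/-- One-step "value" of the race `p` before `q` given the next request is `x`. -/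
noncomputable def chiF {n : ℕ} (M : Fin n → Fin n → ℝ) (T : ℕ) (p q x : Fin n) : ℝ :=
  if x = q then 0 else if x = p then 1 else alphaAux M p q T x

variable {n : ℕ} {M : Fin n → Fin n → ℝ}

lemma alphaAux_nonneg (hM : IsStochastic M) (p q : Fin n) :
    ∀ T s, 0 ≤ alphaAux M p q T s := by
  intro T
  induction T with
  | zero => intro s; simp [alphaAux]
  | succ T ih =>
    intro s
    rw [alphaAux]
    apply Finset.sum_nonneg
    intro x _
    apply mul_nonneg ((hM s).1 x)
    split
    · exact le_rfl
    · split
      · exact zero_le_one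
      · exact ih x

lemma alphaAux_le_one (hM : IsStochastic M) (p q : Fin n) :
    ∀ T s, alphaAux M p q T s ≤ 1 := by
  intro T
  induction T with
  | zero => intro s; simp [alphaAux]
  | succ T ih =>
    intro s
    rw [alphaAux]
    calc ∑ x : Fin n, M s x * (if x = q then 0 else if x = p then 1 else alphaAux M p q T x)
        ≤ ∑ x : Fin n, M s x * 1 := by
          apply Finset.sum_le_sum
          intro x _
          apply mul_le_mul_of_nonneg_left _ ((hM s).1 x)
          split
          · exact zero_le_one
          · split
            · exact le_rfl
            · exact ih x
      _ = 1 := by simp [(hM s).2]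

lemma chiF_nonneg (hM : IsStochastic M) (T : ℕ) (p q x : Fin n) : 0 ≤ chiF M T p q x := by
  unfold chiF
  split
  · exact le_rfl
  · split
    · exact zero_le_one
    · exact alphaAux_nonneg hM p q T x

lemma chiF_le_one (hM : IsStochastic M) (T : ℕ) (p q x : Fin n) : chiF M T p q x ≤ 1 := by
  unfold chiF
  split
  · exact zero_le_one
  · split
    · exact le_rfl
    · exact alphaAux_le_one hM p q T x

lemma alphaAux_succ (p q : Fin n) (T : ℕ) (s : Fin n) :
    alphaAux M p q (T + 1) s = ∑ x : Fin n, M s x * chiF M T p q x := rfl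

lemma alphaAux_le_alphaProb (hM : IsStochastic M) (p q : Fin n) (T : ℕ) (s : Fin n) :
    alphaAux M p q T s ≤ alphaProb M p q s := by
  have hbdd : BddAbove (Set.range fun T => alphaAux M p q T s) :=
    ⟨1, by rintro y ⟨T', rfl⟩; exact alphaAux_le_one hM p q T' s⟩
  exact le_ciSup hbdd T


lemma alphaAux_triangle (hM : IsStochastic M) (a b c : Fin n) :
    ∀ T x, alphaAux M a c T x ≤ alphaAux M a b T x + alphaAux M b c T x := by
  intro T
  induction T with
  | zero => intro x; simp [alphaAux]
  | succ T ih =>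
    intro s
    rw [alphaAux_succ, alphaAux_succ, alphaAux_succ, ← Finset.sum_add_distrib]
    apply Finset.sum_le_sum
    intro x _
    rw [← mul_add]
    apply mul_le_mul_of_nonneg_left _ ((hM s).1 x)
    by_cases hxc : x = c
    · rw [chiF, if_pos hxc]
      exact add_nonneg (chiF_nonneg hM T a b x) (chiF_nonneg hM T b c x)
    · by_cases hxa : x = a
      · rw [chiF, if_neg hxc, if_pos hxa]
        by_cases hxb : x = b
        · rw [chiF, if_pos hxb, chiF, if_neg hxc, if_pos hxb]; norm_num
        · rw [chiF, if_neg hxb, if_pos hxa]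
          have := chiF_nonneg hM T b c x
          linarith
      · by_cases hxb : x = b
        · rw [chiF, if_neg hxc, if_neg hxa, chiF, if_pos hxb, chiF, if_neg hxc, if_pos hxb]
          have := alphaAux_le_one hM a c T x
          linarith
        · rw [chiF, if_neg hxc, if_neg hxa, chiF, if_neg hxb, if_neg hxa, chiF, if_neg hxc,
            if_neg hxb]
          exact ih x

lemma chiF_triangle (hM : IsStochastic M) (a b c : Fin n) (T : ℕ) (x : Fin n) :
    chiF M T a c x ≤ chiF M T a b x + chiF M T b c x := by
  by_cases hxc : x = c
  · rw [chiF, if_pos hxc]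
    exact add_nonneg (chiF_nonneg hM T a b x) (chiF_nonneg hM T b c x)
  · by_cases hxa : x = a
    · rw [chiF, if_neg hxc, if_pos hxa]
      by_cases hxb : x = b
      · rw [chiF, if_pos hxb, chiF, if_neg hxc, if_pos hxb]; norm_num
      · rw [chiF, if_neg hxb, if_pos hxa]
        have := chiF_nonneg hM T b c x
        linarith
    · by_cases hxb : x = b
      · rw [chiF, if_neg hxc, if_neg hxa, chiF, if_pos hxb, chiF, if_neg hxc, if_pos hxb]
        have := alphaAux_le_one hM a c T x
        linarith
      · rw [chiF, if_neg hxc, if_neg hxa, chiF, if_neg hxb, if_neg hxa, chiF, if_neg hxc,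
          if_neg hxb]
        exact alphaAux_triangle hM a b c T x

/-- `m` restricted to `D` is a bijection onto `H`. -/
def MatchesOn (m : Fin n → Fin n) (D H : Finset (Fin n)) : Prop :=
  (∀ p ∈ D, m p ∈ H) ∧ (∀ p ∈ D, ∀ p' ∈ D, m p = m p' → p = p') ∧ ∀ q ∈ H, ∃ p ∈ D, m p = q

lemma MatchesOn.erase {m : Fin n → Fin n} {D H : Finset (Fin n)}
    (h : MatchesOn m D H) {b : Fin n} (hb : b ∈ D) :
    MatchesOn m (D.erase b) (H.erase (m b)) := by
  obtain ⟨hmap, hinj, hsurj⟩ := h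
  refine ⟨?_, ?_, ?_⟩
  · intro p hp
    rw [Finset.mem_erase] at hp ⊢
    exact ⟨fun he => hp.1 (hinj p hp.2 b hb he), hmap p hp.2⟩
  · intro p hp p' hp' he
    exact hinj p (Finset.mem_of_mem_erase hp) p' (Finset.mem_of_mem_erase hp') he
  · intro q hq
    rw [Finset.mem_erase] at hq
    obtain ⟨p, hp, rfl⟩ := hsurj q hq.2
    exact ⟨p, Finset.mem_erase.2 ⟨fun he => hq.1 (he ▸ rfl), hp⟩, rfl⟩

/-- Key rematching step: `m₁` matches `D₁` with `H₁` minus a free hole `q₀`.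
After adding the page `p'` to the "extra pages" side (it lands there only if it is
not already a hole, i.e. not in `H₁`), we can rematch so that the total
weight grows by at most `w p' q₀`. -/
lemma rematch_insert (w : Fin n → Fin n → ℝ)
    (hw0 : ∀ p q, 0 ≤ w p q)
    (hwt : ∀ a b c, w a c ≤ w a b + w b c)
    (D₁ H₁ : Finset (Fin n)) (q₀ : Fin n) (hq₀ : q₀ ∈ H₁)
    (m₁ : Fin n → Fin n) (hm₁ : MatchesOn m₁ D₁ (H₁.erase q₀))
    (p' : Fin n) (hp'D : p' ∉ D₁) :
    ∃ m₂, MatchesOn m₂ (if p' ∈ H₁ then D₁ else insert p' D₁) (H₁.erase p') ∧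
      ∑ p ∈ (if p' ∈ H₁ then D₁ else insert p' D₁), w p (m₂ p) ≤
        (∑ p ∈ D₁, w p (m₁ p)) + w p' q₀ := by
  obtain ⟨hmap, hinj, hsurj⟩ := hm₁
  by_cases hp'H : p' ∈ H₁
  · rw [if_pos hp'H]
    by_cases hpq : p' = q₀
    · subst hpq
      exact ⟨m₁, ⟨hmap, hinj, hsurj⟩, le_add_of_le_of_nonneg le_rfl (hw0 _ _)⟩
    · -- p' is matched; redirect its partner to q₀
      obtain ⟨p₁, hp₁, hmp₁⟩ := hsurj p' (Finset.mem_erase.2 ⟨hpq, hp'H⟩)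
      refine ⟨Function.update m₁ p₁ q₀, ⟨?_, ?_, ?_⟩, ?_⟩
      · intro p hp
        by_cases hpp : p = p₁
        · subst hpp
          rw [Function.update_self, Finset.mem_erase]
          exact ⟨fun he => hpq he.symm, hq₀⟩
        · rw [Function.update_of_ne hpp, Finset.mem_erase]
          refine ⟨fun he => hpp (hinj p hp p₁ hp₁ (he.trans hmp₁.symm)), ?_⟩
          exact Finset.mem_of_mem_erase (hmap p hp)
      · intro p hp p' hp' he
        by_cases hpp : p = p₁ <;> by_cases hpp' : p' = p₁
        · rw [hpp, hpp']
        · exfalso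
          rw [hpp, Function.update_self, Function.update_of_ne hpp'] at he
          have := Finset.mem_erase.1 (hmap p' hp')
          exact this.1 he.symm
        · exfalso
          rw [hpp', Function.update_self, Function.update_of_ne hpp] at he
          have := Finset.mem_erase.1 (hmap p hp)
          exact this.1 he
        · rw [Function.update_of_ne hpp, Function.update_of_ne hpp'] at he
          exact hinj p hp p' hp' he
      · intro q hq
        rw [Finset.mem_erase] at hq
        by_cases hqq : q = q₀
        · exact ⟨p₁, hp₁, by rw [Function.update_self, hqq]⟩
        · obtain ⟨p, hp, rfl⟩ := hsurj q (Finset.mem_erase.2 ⟨hqq, hq.2⟩)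
          have hppne : p ≠ p₁ := fun he => hq.1 (by rw [← hmp₁, ← he])
          exact ⟨p, hp, Function.update_of_ne hppne _ _⟩
      · -- sum estimate
        rw [← Finset.add_sum_erase _ _ hp₁, ← Finset.add_sum_erase _ (fun p => w p (m₁ p)) hp₁]
        have h1 : ∑ p ∈ D₁.erase p₁, w p (Function.update m₁ p₁ q₀ p)
            = ∑ p ∈ D₁.erase p₁, w p (m₁ p) := by
          apply Finset.sum_congr rfl
          intro p hp
          rw [Function.update_of_ne (Finset.mem_erase.1 hp).1]
        rw [Function.update_self, h1]
        have h2 : w p₁ q₀ ≤ w p₁ (m₁ p₁) + w p' q₀ := by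
          have := hwt p₁ p' q₀
          rw [hmp₁]
          exact this
        linarith
  · rw [if_neg hp'H, Finset.erase_eq_of_notMem hp'H]
    have key : ∀ z ∈ D₁, Function.update m₁ p' q₀ z = m₁ z := by
      intro z hz
      apply Function.update_of_ne
      intro h
      rw [h] at hz
      exact hp'D hz
    refine ⟨Function.update m₁ p' q₀, ⟨?_, ?_, ?_⟩, ?_⟩
    · intro p hp
      rcases Finset.mem_insert.1 hp with rfl | hp
      · rw [Function.update_self]; exact hq₀
      · rw [key p hp]
        exact Finset.mem_of_mem_erase (hmap p hp)
    · intro a ha b hb he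
      rcases Finset.mem_insert.1 ha with ha' | ha
      · rcases Finset.mem_insert.1 hb with hb' | hb
        · rw [ha', hb']
        · exfalso
          rw [ha', Function.update_self, key b hb] at he
          exact (Finset.mem_erase.1 (hmap b hb)).1 he.symm
      · rcases Finset.mem_insert.1 hb with hb' | hb
        · exfalso
          rw [hb', Function.update_self, key a ha] at he
          exact (Finset.mem_erase.1 (hmap a ha)).1 he
        · rw [key a ha, key b hb] at he
          exact hinj a ha b hb he
    · intro q hq
      by_cases hqq : q = q₀
      · exact ⟨p', Finset.mem_insert_self _ _, by rw [Function.update_self, hqq]⟩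
      · obtain ⟨p, hp, rfl⟩ := hsurj q (Finset.mem_erase.2 ⟨hqq, hq⟩)
        exact ⟨p, Finset.mem_insert_of_mem hp, key p hp⟩
    · rw [Finset.sum_insert hp'D, Function.update_self]
      have h1 : ∑ p ∈ D₁, w p (Function.update m₁ p' q₀ p) = ∑ p ∈ D₁, w p (m₁ p) :=
        Finset.sum_congr rfl fun p hp => by rw [key p hp]
      rw [h1, add_comm]

/-- Rematching after `B` evicts `b` on a fault at `x` (which is a hole of `B`,
matched to `p₀`): the weight of the new matching exceeds the weight of the old
matching minus the `p₀`-pair by at most `1`. -/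
lemma rematch_Bevict (w : Fin n → Fin n → ℝ)
    (hw0 : ∀ p q, 0 ≤ w p q) (hw1 : ∀ p q, w p q ≤ 1)
    (D H : Finset (Fin n)) (m : Fin n → Fin n) (hm : MatchesOn m D H)
    (x : Fin n) (p₀ : Fin n) (hp₀D : p₀ ∈ D) (hmp₀ : m p₀ = x)
    (b : Fin n) (hbH : b ∉ H) :
    ∃ m', MatchesOn m' (D.erase b) (if b ∈ D then H.erase x else insert b (H.erase x)) ∧
      ∑ p ∈ D.erase b, w p (m' p) ≤ (∑ p ∈ D.erase p₀, w p (m p)) + 1 := by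
  obtain ⟨hmap, hinj, hsurj⟩ := hm
  have hxH : x ∈ H := hmp₀ ▸ hmap p₀ hp₀D
  by_cases hbD : b ∈ D
  · rw [if_pos hbD]
    by_cases hbp : b = p₀
    · subst hbp
      refine ⟨m, ?_, le_add_of_le_of_nonneg le_rfl zero_le_one⟩
      have := MatchesOn.erase ⟨hmap, hinj, hsurj⟩ hbD
      rwa [hmp₀] at this
    · -- redirect p₀ to m b
      have hp₀b : p₀ ∈ D.erase b := Finset.mem_erase.2 ⟨fun h => hbp h.symm, hp₀D⟩
      have hkey : ∀ z ∈ D.erase b, z ≠ p₀ → Function.update m p₀ (m b) z = m z :=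
        fun z _ hz => Function.update_of_ne hz _ _
      refine ⟨Function.update m p₀ (m b), ⟨?_, ?_, ?_⟩, ?_⟩
      · intro p hp
        rw [Finset.mem_erase] at hp
        by_cases hpp : p = p₀
        · rw [hpp, Function.update_self, Finset.mem_erase]
          refine ⟨fun he => hbp (hinj b hbD p₀ hp₀D (he.trans hmp₀.symm)), hmap b hbD⟩
        · rw [Function.update_of_ne hpp, Finset.mem_erase]
          refine ⟨fun he => hpp (hinj p hp.2 p₀ hp₀D (he.trans hmp₀.symm)), hmap p hp.2⟩
      · intro a ha a' ha' he
        rw [Finset.mem_erase] at ha ha'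
        by_cases h1 : a = p₀ <;> by_cases h2 : a' = p₀
        · rw [h1, h2]
        · exfalso
          rw [h1, Function.update_self, Function.update_of_ne h2] at he
          exact ha'.1 (hinj a' ha'.2 b hbD he.symm)
        · exfalso
          rw [h2, Function.update_self, Function.update_of_ne h1] at he
          exact ha.1 (hinj a ha.2 b hbD he)
        · rw [Function.update_of_ne h1, Function.update_of_ne h2] at he
          exact hinj a ha.2 a' ha'.2 he
      · intro q hq
        rw [Finset.mem_erase] at hq
        obtain ⟨p, hp, rfl⟩ := hsurj q hq.2
        by_cases hpb : p = b
        · subst hpb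
          exact ⟨p₀, hp₀b, by rw [Function.update_self]⟩
        · have hpp0 : p ≠ p₀ := fun he => hq.1 (by rw [he, hmp₀])
          exact ⟨p, Finset.mem_erase.2 ⟨hpb, hp⟩, Function.update_of_ne hpp0 _ _⟩
      · rw [← Finset.add_sum_erase _ _ hp₀b, Function.update_self]
        have h1 : ∑ p ∈ (D.erase b).erase p₀, w p (Function.update m p₀ (m b) p)
            = ∑ p ∈ (D.erase b).erase p₀, w p (m p) :=
          Finset.sum_congr rfl fun p hp =>
            by rw [Function.update_of_ne (Finset.mem_erase.1 hp).1]
        rw [h1]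
        have h2 : ∑ p ∈ (D.erase b).erase p₀, w p (m p) ≤ ∑ p ∈ D.erase p₀, w p (m p) := by
          apply Finset.sum_le_sum_of_subset_of_nonneg
          · intro z hz
            rw [Finset.mem_erase] at hz ⊢
            exact ⟨hz.1, (Finset.mem_erase.1 hz.2).2⟩
          · intro z _ _; exact hw0 _ _
        have := hw1 p₀ (m b)
        linarith
  · rw [if_neg hbD, Finset.erase_eq_of_notMem hbD]
    refine ⟨Function.update m p₀ b, ⟨?_, ?_, ?_⟩, ?_⟩
    · intro p hp
      by_cases hpp : p = p₀
      · rw [hpp, Function.update_self]; exact Finset.mem_insert_self _ _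
      · rw [Function.update_of_ne hpp]
        apply Finset.mem_insert_of_mem
        rw [Finset.mem_erase]
        exact ⟨fun he => hpp (hinj p hp p₀ hp₀D (he.trans hmp₀.symm)), hmap p hp⟩
    · intro a ha a' ha' he
      by_cases h1 : a = p₀ <;> by_cases h2 : a' = p₀
      · rw [h1, h2]
      · exfalso
        rw [h1, Function.update_self, Function.update_of_ne h2] at he
        exact hbH (he ▸ hmap a' ha')
      · exfalso
        rw [h2, Function.update_self, Function.update_of_ne h1] at he
        exact hbH (he ▸ hmap a ha)
      · rw [Function.update_of_ne h1, Function.update_of_ne h2] at he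
        exact hinj a ha a' ha' he
    · intro q hq
      rcases Finset.mem_insert.1 hq with rfl | hq
      · exact ⟨p₀, hp₀D, Function.update_self _ _ _⟩
      · rw [Finset.mem_erase] at hq
        obtain ⟨p, hp, rfl⟩ := hsurj q hq.2
        have hpp0 : p ≠ p₀ := fun he => hq.1 (by rw [he, hmp₀])
        exact ⟨p, hp, Function.update_of_ne hpp0 _ _⟩
    · rw [← Finset.add_sum_erase _ _ hp₀D, Function.update_self]
      have h1 : ∑ p ∈ D.erase p₀, w p (Function.update m p₀ b p)
          = ∑ p ∈ D.erase p₀, w p (m p) :=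
        Finset.sum_congr rfl fun p hp =>
          by rw [Function.update_of_ne (Finset.mem_erase.1 hp).1]
      rw [h1]
      have := hw1 p₀ b
      linarith

/-- Averaging a family of bounds against an eviction distribution. -/
lemma avg_bound {S : Finset (Fin n)} {μ f g : Fin n → ℝ} {K c bound : ℝ}
    (hμ0 : ∀ p, 0 ≤ μ p) (hμ1 : ∑ p ∈ S, μ p = 1)
    (hf : ∀ p ∈ S, f p ≤ K + c * g p) (hg : ∑ p ∈ S, μ p * g p ≤ bound) (hc : 0 ≤ c) :
    ∑ p ∈ S, μ p * f p ≤ K + c * bound := by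
  have h1 : ∑ p ∈ S, μ p * f p ≤ ∑ p ∈ S, μ p * (K + c * g p) :=
    Finset.sum_le_sum fun p hp => mul_le_mul_of_nonneg_left (hf p hp) (hμ0 p)
  have h2 : ∑ p ∈ S, μ p * (K + c * g p) = (∑ p ∈ S, μ p) * K + c * ∑ p ∈ S, μ p * g p := by
    rw [Finset.sum_mul, Finset.mul_sum, ← Finset.sum_add_distrib]
    exact Finset.sum_congr rfl fun p _ => by ring
  have h3 : c * ∑ p ∈ S, μ p * g p ≤ c * bound := mul_le_mul_of_nonneg_left hg hc
  rw [h2, hμ1, one_mul] at h1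
  linarith

/-- Averaging a constant against an eviction distribution. -/
lemma avg_const {S : Finset (Fin n)} {ν F : Fin n → ℝ} {V K : ℝ}
    (hν0 : ∀ p, 0 ≤ ν p) (hν1 : ∑ p ∈ S, ν p = 1)
    (hf : ∀ b ∈ S, V ≤ F b + K) :
    V ≤ (∑ b ∈ S, ν b * F b) + K := by
  have h1 : V = ∑ b ∈ S, ν b * V := by rw [← Finset.sum_mul, hν1, one_mul]
  have h2 : ∑ b ∈ S, ν b * V ≤ ∑ b ∈ S, ν b * (F b + K) :=
    Finset.sum_le_sum fun b hb => mul_le_mul_of_nonneg_left (hf b hb) (hν0 b)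
  have h3 : ∑ b ∈ S, ν b * (F b + K) = (∑ b ∈ S, ν b * F b) + (∑ b ∈ S, ν b) * K := by
    rw [Finset.sum_mul, ← Finset.sum_add_distrib]
    exact Finset.sum_congr rfl fun b _ => by ring
  rw [h3, hν1, one_mul] at h2
  linarith


section SetIdentities
variable {x p' b : Fin n} {CA CB CB' : Finset (Fin n)}

lemma insert_sdiff_of_mem' (hxB : x ∈ CB') : insert x CA \ CB' = CA \ CB' := by
  ext y
  simp only [Finset.mem_sdiff, Finset.mem_insert]
  have h1 : y = x → y ∈ CB' := by rintro rfl; exact hxB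
  tauto

lemma my_sdiff_insert (hxA : x ∉ CA) : CB' \ insert x CA = (CB' \ CA).erase x := by
  ext y
  simp only [Finset.mem_sdiff, Finset.mem_insert, Finset.mem_erase]
  tauto

lemma holes_after_Aevict (hp' : p' ∈ CA) (hxB : x ∈ CB') :
    (insert x (CA.erase p')) \ CB' = ((insert x CA) \ CB').erase p' := by
  ext y
  simp only [Finset.mem_sdiff, Finset.mem_insert, Finset.mem_erase]
  have h1 : y = x → y ∈ CB' := by rintro rfl; exact hxB
  tauto

lemma extra_after_Aevict_mem (hxA : x ∉ CA) (hp' : p' ∈ CA) (hpB : p' ∈ CB') :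
    CB' \ (insert x (CA.erase p')) = insert p' (CB' \ insert x CA) := by
  ext y
  simp only [Finset.mem_sdiff, Finset.mem_insert, Finset.mem_erase]
  have h1 : y = p' → y ∈ CB' := by rintro rfl; exact hpB
  have h2 : y = p' → y ∈ CA := by rintro rfl; exact hp'
  have h3 : y = p' → ¬ y = x := by rintro rfl h; rw [h] at hp'; exact hxA hp'
  tauto

lemma extra_after_Aevict_notMem (hpB : p' ∉ CB') :
    CB' \ (insert x (CA.erase p')) = CB' \ insert x CA := by
  ext y
  simp only [Finset.mem_sdiff, Finset.mem_insert, Finset.mem_erase]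
  have h1 : y = p' → y ∉ CB' := by rintro rfl; exact hpB
  tauto

lemma extra_after_Bevict (hxA : x ∈ CA) :
    (insert x (CB.erase b)) \ CA = (CB \ CA).erase b := by
  ext y
  simp only [Finset.mem_sdiff, Finset.mem_insert, Finset.mem_erase]
  have h1 : y = x → y ∈ CA := by rintro rfl; exact hxA
  tauto

lemma holes_after_Bevict_mem (hxB : x ∉ CB) (hb : b ∈ CB) (hbA : b ∈ CA) :
    CA \ (insert x (CB.erase b)) = insert b ((CA \ CB).erase x) := by
  ext y
  simp only [Finset.mem_sdiff, Finset.mem_insert, Finset.mem_erase]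
  have h1 : y = b → y ∈ CA := by rintro rfl; exact hbA
  have h2 : y = b → y ∈ CB := by rintro rfl; exact hb
  have h3 : y = b → ¬y = x := by rintro rfl h; rw [h] at hb; exact hxB hb
  tauto

lemma holes_after_Bevict_notMem (hxB : x ∉ CB) (hbA : b ∉ CA) :
    CA \ (insert x (CB.erase b)) = (CA \ CB).erase x := by
  ext y
  simp only [Finset.mem_sdiff, Finset.mem_insert, Finset.mem_erase]
  have h1 : y = b → y ∉ CA := by rintro rfl; exact hbA
  tauto

-- case-4 versions (x in neither cache)
lemma extra4 (hxB : x ∉ CB) (hb : b ∈ CB) :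
    (insert x (CB.erase b)) \ insert x CA = (CB \ CA).erase b := by
  ext y
  simp only [Finset.mem_sdiff, Finset.mem_insert, Finset.mem_erase]
  have h1 : y = x → y ∉ CB := by rintro rfl; exact hxB
  tauto

lemma holes4_mem (hxA : x ∉ CA) (hxB : x ∉ CB) (hb : b ∈ CB) (hbA : b ∈ CA) :
    (insert x CA) \ (insert x (CB.erase b)) = insert b (CA \ CB) := by
  ext y
  simp only [Finset.mem_sdiff, Finset.mem_insert, Finset.mem_erase]
  have h1 : y = b → y ∈ CA := by rintro rfl; exact hbA
  have h2 : y = b → y ∈ CB := by rintro rfl; exact hb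
  have h3 : y = x → y ∉ CA := by rintro rfl; exact hxA
  have h4 : y = b → ¬y = x := by rintro rfl h; rw [h] at hb; exact hxB hb
  tauto

lemma holes4_notMem (hxA : x ∉ CA) (hbA : b ∉ CA) :
    (insert x CA) \ (insert x (CB.erase b)) = CA \ CB := by
  ext y
  simp only [Finset.mem_sdiff, Finset.mem_insert, Finset.mem_erase]
  have h1 : y = b → y ∉ CA := by rintro rfl; exact hbA
  have h3 : y = x → y ∉ CA := by rintro rfl; exact hxA
  tauto

end SetIdentities

section Main

variable {n : ℕ} {M : Fin n → Fin n → ℝ}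

lemma card_insert_erase {x p : Fin n} {s : Finset (Fin n)} (hx : x ∉ s) (hp : p ∈ s) :
    (insert x (s.erase p)).card = s.card := by
  have h0 : 0 < s.card := Finset.card_pos.2 ⟨p, hp⟩
  rw [Finset.card_insert_of_notMem (fun h => hx (Finset.mem_of_mem_erase h)),
    Finset.card_erase_of_mem hp]
  omega

lemma dom_bound {k : ℕ} {A : Policy n} {ε : ℝ} (hM : IsStochastic M)
    (hA : IsMulApproxDomPolicy k M A ε) (x : Fin n) (h : List (Fin n))
    (CA : Finset (Fin n)) (hCA : CA.card = k) (hxA : x ∉ CA) (T : ℕ)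
    {q : Fin n} (hq : q ∈ CA) :
    ∑ p ∈ CA, A (x :: h) CA p * alphaAux M p q (T + 1) x ≤ 1 / (2 * (1 - ε)) := by
  have h1 : ∑ p ∈ CA, A (x :: h) CA p * alphaAux M p q (T + 1) x ≤
      ∑ p ∈ CA, A (x :: h) CA p * alphaProb M p q x := by
    apply Finset.sum_le_sum
    intro p _
    exact mul_le_mul_of_nonneg_left (alphaAux_le_alphaProb hM p q (T + 1) x)
      ((hA.1 (x :: h) CA hCA).1 p)
  exact h1.trans (hA.2 x h CA hCA hxA q hq)

theorem main_bound {k : ℕ} {A B : Policy n} {ε : ℝ} (hM : IsStochastic M)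
    (hA : IsMulApproxDomPolicy k M A ε) (hB : IsPolicy k B)
    (c : ℝ) (hc0 : 0 < c) (hcid : 1 + c / (2 * (1 - ε)) = c) :
    ∀ (T : ℕ) (dist : Fin n → ℝ), (∀ y, 0 ≤ dist y) →
      ∀ (h : List (Fin n)) (CA CB : Finset (Fin n)) (m : Fin n → Fin n),
        CA.card = k → CB.card = k → MatchesOn m (CB \ CA) (CA \ CB) →
        runAux M A T dist h CA ≤ c * runAux M B T dist h CB +
          c * ∑ p ∈ CB \ CA, ∑ y, dist y * chiF M T p (m p) y := by
  intro T
  induction T with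
  | zero =>
    intro dist hdist h CA CB m hCA hCB hmatch
    rw [runAux, runAux]
    have : 0 ≤ c * ∑ p ∈ CB \ CA, ∑ y, dist y * chiF M 0 p (m p) y := by
      apply mul_nonneg hc0.le
      apply Finset.sum_nonneg; intro p _
      apply Finset.sum_nonneg; intro y _
      exact mul_nonneg (hdist y) (chiF_nonneg hM 0 p (m p) y)
    linarith
  | succ T IH =>
    intro dist hdist h CA CB m hCA hCB hmatch
    -- pointwise key inequality
    have key : ∀ x : Fin n,
        (if x ∈ CA then runAux M A T (M x) (x :: h) CA
         else 1 + ∑ p ∈ CA, A (x :: h) CA p *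
            runAux M A T (M x) (x :: h) (insert x (CA.erase p)))
        ≤ c * (if x ∈ CB then runAux M B T (M x) (x :: h) CB
         else 1 + ∑ p ∈ CB, B (x :: h) CB p *
            runAux M B T (M x) (x :: h) (insert x (CB.erase p)))
        + c * ∑ p ∈ CB \ CA, chiF M (T + 1) p (m p) x := by
      intro x
      have IHw : ∀ (CA' CB' : Finset (Fin n)) (m' : Fin n → Fin n),
          CA'.card = k → CB'.card = k → MatchesOn m' (CB' \ CA') (CA' \ CB') →
          runAux M A T (M x) (x :: h) CA' ≤ c * runAux M B T (M x) (x :: h) CB' +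
            c * ∑ p ∈ CB' \ CA', alphaAux M p (m' p) (T + 1) x := by
        intro CA' CB' m' h1 h2 h3
        have := IH (M x) (hM x).1 (x :: h) CA' CB' m' h1 h2 h3
        simpa only [← alphaAux_succ] using this
      have hw0 : ∀ p q : Fin n, (0:ℝ) ≤ alphaAux M p q (T+1) x :=
        fun p q => alphaAux_nonneg hM p q (T+1) x
      have hw1 : ∀ p q : Fin n, alphaAux M p q (T+1) x ≤ 1 :=
        fun p q => alphaAux_le_one hM p q (T+1) x
      have hwt : ∀ a b c' : Fin n, alphaAux M a c' (T+1) x ≤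
          alphaAux M a b (T+1) x + alphaAux M b c' (T+1) x :=
        fun a b c' => alphaAux_triangle hM a b c' (T+1) x
      by_cases hxA : x ∈ CA <;> by_cases hxB : x ∈ CB
      · -- Case 1 : hit for both
        rw [if_pos hxA, if_pos hxB]
        have hV : ∑ p ∈ CB \ CA, chiF M (T + 1) p (m p) x
            = ∑ p ∈ CB \ CA, alphaAux M p (m p) (T + 1) x := by
          apply Finset.sum_congr rfl
          intro p hp
          rw [Finset.mem_sdiff] at hp
          have hmp := hmatch.1 p (Finset.mem_sdiff.2 hp)
          rw [Finset.mem_sdiff] at hmp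
          rw [chiF, if_neg (show ¬x = m p by intro he; rw [he] at hxB; exact hmp.2 hxB),
            if_neg (show ¬x = p by intro he; rw [he] at hxA; exact hp.2 hxA)]
        rw [hV]
        exact IHw CA CB m hCA hCB hmatch
      · -- Case 3 : A hits (x ∈ CA), B misses (x ∉ CB)
        rw [if_pos hxA, if_neg hxB]
        have hxH : x ∈ CA \ CB := Finset.mem_sdiff.2 ⟨hxA, hxB⟩
        obtain ⟨p₀, hp₀D, hmp₀⟩ := hmatch.2.2 x hxH
        have hν := hB (x :: h) CB hCB
        set S₀ := ∑ p ∈ (CB \ CA).erase p₀, alphaAux M p (m p) (T + 1) x with hS₀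
        have hstep : ∀ b ∈ CB, runAux M A T (M x) (x :: h) CA ≤
            c * runAux M B T (M x) (x :: h) (insert x (CB.erase b)) + (c * S₀ + c) := by
          intro b hb
          have hbH : b ∉ CA \ CB := fun hc => (Finset.mem_sdiff.1 hc).2 hb
          obtain ⟨m', hm', hsum'⟩ := rematch_Bevict _ hw0 hw1 (CB \ CA) (CA \ CB) m hmatch
            x p₀ hp₀D hmp₀ b hbH
          have hext : (insert x (CB.erase b)) \ CA = (CB \ CA).erase b :=
            extra_after_Bevict hxA
          have hholes : CA \ (insert x (CB.erase b)) =
              (if b ∈ CB \ CA then (CA \ CB).erase x else insert b ((CA \ CB).erase x)) := by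
            by_cases hbA : b ∈ CA
            · rw [if_neg (fun hc => (Finset.mem_sdiff.1 hc).2 hbA),
                holes_after_Bevict_mem hxB hb hbA]
            · rw [if_pos (Finset.mem_sdiff.2 ⟨hb, hbA⟩), holes_after_Bevict_notMem hxB hbA]
          have hcard' : (insert x (CB.erase b)).card = k := by
            rw [card_insert_erase hxB hb, hCB]
          have hmm : MatchesOn m' ((insert x (CB.erase b)) \ CA)
              (CA \ (insert x (CB.erase b))) := by rw [hext, hholes]; exact hm'
          have hIH := IHw CA (insert x (CB.erase b)) m' hCA hcard' hmm
          have hpot : ∑ p ∈ (insert x (CB.erase b)) \ CA, alphaAux M p (m' p) (T + 1) x ≤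
              S₀ + 1 := by rw [hext]; exact hsum'
          have hmul := mul_le_mul_of_nonneg_left hpot hc0.le
          rw [mul_add, mul_one] at hmul
          linarith
        have havg := avg_const hν.1 hν.2.2 hstep
        have hsum : ∑ b ∈ CB, B (x :: h) CB b *
              (c * runAux M B T (M x) (x :: h) (insert x (CB.erase b)))
            = c * ∑ b ∈ CB, B (x :: h) CB b *
              runAux M B T (M x) (x :: h) (insert x (CB.erase b)) := by
          rw [Finset.mul_sum]
          exact Finset.sum_congr rfl fun b _ => by ring
        have hV : ∑ p ∈ CB \ CA, chiF M (T + 1) p (m p) x = S₀ := by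
          rw [← Finset.add_sum_erase _ _ hp₀D]
          have h1 : chiF M (T + 1) p₀ (m p₀) x = 0 := by rw [chiF, hmp₀, if_pos rfl]
          have h2 : ∑ p ∈ (CB \ CA).erase p₀, chiF M (T + 1) p (m p) x = S₀ :=
            Finset.sum_congr rfl fun p hp => by
              have hpD := Finset.mem_of_mem_erase hp
              have hxp : ¬x = p := fun he =>
                (Finset.mem_sdiff.1 hpD).2 (he ▸ hxA)
              have hxmp : ¬x = m p := fun he =>
                (Finset.mem_erase.1 hp).1
                  (hmatch.2.1 p hpD p₀ hp₀D (by rw [hmp₀, ← he]))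
              rw [chiF, if_neg hxmp, if_neg hxp]
          rw [h1, h2, zero_add]
        rw [hV]
        have hexp : c * (1 + ∑ b ∈ CB, B (x :: h) CB b *
            runAux M B T (M x) (x :: h) (insert x (CB.erase b)))
            = c + c * ∑ b ∈ CB, B (x :: h) CB b *
              runAux M B T (M x) (x :: h) (insert x (CB.erase b)) := by ring
        linarith
      · -- Case 2 : A misses (x ∉ CA), B hits (x ∈ CB)
        rw [if_neg hxA, if_pos hxB]
        have hxD : x ∈ CB \ CA := Finset.mem_sdiff.2 ⟨hxB, hxA⟩
        have hq₀H : m x ∈ CA \ CB := hmatch.1 x hxD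
        have hq₀A : m x ∈ CA := (Finset.mem_sdiff.1 hq₀H).1
        have hμ := hA.1 (x :: h) CA hCA
        set S₁ := ∑ p ∈ (CB \ CA).erase x, alphaAux M p (m p) (T + 1) x with hS₁
        have hm₁ : MatchesOn m ((CB \ CA).erase x) ((CA \ CB).erase (m x)) :=
          MatchesOn.erase hmatch hxD
        have hstep : ∀ p' ∈ CA,
            runAux M A T (M x) (x :: h) (insert x (CA.erase p')) ≤
              (c * runAux M B T (M x) (x :: h) CB + c * S₁) +
                c * alphaAux M p' (m x) (T + 1) x := by
          intro p' hp'
          have hp'D1 : p' ∉ (CB \ CA).erase x :=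
            fun hc => (Finset.mem_sdiff.1 (Finset.mem_of_mem_erase hc)).2 hp'
          obtain ⟨m₂, hm₂, hsum₂⟩ := rematch_insert _ hw0 hwt ((CB \ CA).erase x)
            (CA \ CB) (m x) hq₀H m hm₁ p' hp'D1
          have hsets : CB \ (insert x (CA.erase p')) =
              (if p' ∈ CA \ CB then (CB \ CA).erase x else insert p' ((CB \ CA).erase x)) := by
            by_cases hp'B : p' ∈ CB
            · rw [if_neg (fun hc => (Finset.mem_sdiff.1 hc).2 hp'B),
                extra_after_Aevict_mem hxA hp' hp'B, my_sdiff_insert hxA]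
            · rw [if_pos (Finset.mem_sdiff.2 ⟨hp', hp'B⟩),
                extra_after_Aevict_notMem hp'B, my_sdiff_insert hxA]
          have hholes : (insert x (CA.erase p')) \ CB = (CA \ CB).erase p' := by
            rw [holes_after_Aevict hp' hxB, insert_sdiff_of_mem' hxB]
          have hcard' : (insert x (CA.erase p')).card = k := by
            rw [card_insert_erase hxA hp', hCA]
          have hmm : MatchesOn m₂ (CB \ insert x (CA.erase p'))
              ((insert x (CA.erase p')) \ CB) := by rw [hsets, hholes]; exact hm₂
          have hIH := IHw (insert x (CA.erase p')) CB m₂ hcard' hCB hmm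
          have hpot : ∑ p ∈ CB \ insert x (CA.erase p'), alphaAux M p (m₂ p) (T + 1) x ≤
              S₁ + alphaAux M p' (m x) (T + 1) x := by rw [hsets]; exact hsum₂
          have hmul := mul_le_mul_of_nonneg_left hpot hc0.le
          rw [mul_add] at hmul
          linarith
        have hdom := dom_bound hM hA x h CA hCA hxA T hq₀A
        have havg := avg_bound hμ.1 hμ.2.2 hstep hdom hc0.le
        have hV : ∑ p ∈ CB \ CA, chiF M (T + 1) p (m p) x = 1 + S₁ := by
          rw [← Finset.add_sum_erase _ _ hxD]
          have h1 : chiF M (T + 1) x (m x) x = 1 := by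
            rw [chiF, if_neg (show ¬x = m x from fun he => hxA (he ▸ hq₀A)), if_pos rfl]
          have h2 : ∑ p ∈ (CB \ CA).erase x, chiF M (T + 1) p (m p) x = S₁ :=
            Finset.sum_congr rfl fun p hp => by
              have hpD := Finset.mem_of_mem_erase hp
              have hmpA : m p ∈ CA := (Finset.mem_sdiff.1 (hmatch.1 p hpD)).1
              rw [chiF, if_neg (show ¬x = m p from fun he => hxA (he ▸ hmpA)),
                if_neg (show ¬x = p from fun he => (Finset.mem_erase.1 hp).1 he.symm)]
          rw [h1, h2]
        rw [hV]
        have hc2 : c * (1 / (2 * (1 - ε))) = c / (2 * (1 - ε)) := by ring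
        have hexp : c * (1 + S₁) = c + c * S₁ := by ring
        linarith
      · -- Case 4 : both miss
        rw [if_neg hxA, if_neg hxB]
        have hμ := hA.1 (x :: h) CA hCA
        have hν := hB (x :: h) CB hCB
        set S := ∑ p ∈ CB \ CA, alphaAux M p (m p) (T + 1) x with hS
        have hbstep : ∀ b ∈ CB,
            ∑ p' ∈ CA, A (x :: h) CA p' *
                runAux M A T (M x) (x :: h) (insert x (CA.erase p')) ≤
              c * runAux M B T (M x) (x :: h) (insert x (CB.erase b)) +
                (c * S + c * (1 / (2 * (1 - ε)))) := by
          intro b hb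
          have hxB' : x ∈ insert x (CB.erase b) := Finset.mem_insert_self _ _
          have hcardB' : (insert x (CB.erase b)).card = k := by
            rw [card_insert_erase hxB hb, hCB]
          have hext1 : (insert x (CB.erase b)) \ insert x CA = (CB \ CA).erase b :=
            extra4 hxB hb
          obtain ⟨q₀, hq₀H₁, hq₀A, hm₁, hP₁⟩ :
              ∃ q₀, q₀ ∈ insert x CA \ (insert x (CB.erase b)) ∧ q₀ ∈ CA ∧
                MatchesOn m ((CB \ CA).erase b)
                  ((insert x CA \ (insert x (CB.erase b))).erase q₀) ∧
                ∑ p ∈ (CB \ CA).erase b, alphaAux M p (m p) (T + 1) x ≤ S := by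
            by_cases hbA : b ∈ CA
            · have hbD : b ∉ CB \ CA := fun hc => (Finset.mem_sdiff.1 hc).2 hbA
              have hbH : b ∉ CA \ CB := fun hc => (Finset.mem_sdiff.1 hc).2 hb
              have hH₁ : insert x CA \ (insert x (CB.erase b)) = insert b (CA \ CB) :=
                holes4_mem hxA hxB hb hbA
              refine ⟨b, ?_, hbA, ?_, ?_⟩
              · rw [hH₁]; exact Finset.mem_insert_self _ _
              · rw [hH₁, Finset.erase_insert hbH, Finset.erase_eq_of_notMem hbD]
                exact hmatch
              · rw [Finset.erase_eq_of_notMem hbD]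
            · have hbD : b ∈ CB \ CA := Finset.mem_sdiff.2 ⟨hb, hbA⟩
              have hH₁ : insert x CA \ (insert x (CB.erase b)) = CA \ CB :=
                holes4_notMem hxA hbA
              have hmbH : m b ∈ CA \ CB := hmatch.1 b hbD
              refine ⟨m b, ?_, (Finset.mem_sdiff.1 hmbH).1, ?_, ?_⟩
              · rw [hH₁]; exact hmbH
              · rw [hH₁]; exact MatchesOn.erase hmatch hbD
              · rw [hS]
                exact Finset.sum_le_sum_of_subset_of_nonneg (Finset.erase_subset _ _)
                  (fun p _ _ => hw0 _ _)
          have hstep : ∀ p' ∈ CA,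
              runAux M A T (M x) (x :: h) (insert x (CA.erase p')) ≤
                (c * runAux M B T (M x) (x :: h) (insert x (CB.erase b)) + c * S) +
                  c * alphaAux M p' q₀ (T + 1) x := by
            intro p' hp'
            have hp'D1 : p' ∉ (CB \ CA).erase b :=
              fun hc => (Finset.mem_sdiff.1 (Finset.mem_of_mem_erase hc)).2 hp'
            obtain ⟨m₂, hm₂, hsum₂⟩ := rematch_insert _ hw0 hwt ((CB \ CA).erase b)
              (insert x CA \ (insert x (CB.erase b))) q₀ hq₀H₁ m hm₁ p' hp'D1
            have hp'x : p' ∈ insert x CA := Finset.mem_insert_of_mem hp'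
            have hiff : p' ∈ insert x CA \ (insert x (CB.erase b)) ↔
                p' ∉ insert x (CB.erase b) := by
              simp only [Finset.mem_sdiff, hp'x, true_and]
            have hsets : (insert x (CB.erase b)) \ (insert x (CA.erase p')) =
                (if p' ∈ insert x CA \ (insert x (CB.erase b)) then (CB \ CA).erase b
                 else insert p' ((CB \ CA).erase b)) := by
              by_cases hp'B : p' ∈ insert x (CB.erase b)
              · rw [if_neg (fun hc => (hiff.1 hc) hp'B),
                  extra_after_Aevict_mem hxA hp' hp'B, hext1]
              · rw [if_pos (hiff.2 hp'B), extra_after_Aevict_notMem hp'B, hext1]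
            have hholes : (insert x (CA.erase p')) \ (insert x (CB.erase b)) =
                (insert x CA \ (insert x (CB.erase b))).erase p' :=
              holes_after_Aevict hp' hxB'
            have hcard' : (insert x (CA.erase p')).card = k := by
              rw [card_insert_erase hxA hp', hCA]
            have hmm : MatchesOn m₂ ((insert x (CB.erase b)) \ insert x (CA.erase p'))
                ((insert x (CA.erase p')) \ (insert x (CB.erase b))) := by
              rw [hsets, hholes]; exact hm₂
            have hIH := IHw (insert x (CA.erase p')) (insert x (CB.erase b)) m₂
              hcard' hcardB' hmm
            have hpot : ∑ p ∈ (insert x (CB.erase b)) \ insert x (CA.erase p'),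
                alphaAux M p (m₂ p) (T + 1) x ≤ S + alphaAux M p' q₀ (T + 1) x := by
              rw [hsets]
              calc ∑ p ∈ (if p' ∈ insert x CA \ (insert x (CB.erase b)) then
                      (CB \ CA).erase b else insert p' ((CB \ CA).erase b)), _
                  ≤ (∑ p ∈ (CB \ CA).erase b, alphaAux M p (m p) (T + 1) x) +
                    alphaAux M p' q₀ (T + 1) x := hsum₂
                _ ≤ S + alphaAux M p' q₀ (T + 1) x := by linarith
            have hmul := mul_le_mul_of_nonneg_left hpot hc0.le
            rw [mul_add] at hmul
            linarith
          have := avg_bound hμ.1 hμ.2.2 hstep (dom_bound hM hA x h CA hCA hxA T hq₀A) hc0.le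
          linarith
        have havg := avg_const hν.1 hν.2.2 hbstep
        have hsum : ∑ b ∈ CB, B (x :: h) CB b *
              (c * runAux M B T (M x) (x :: h) (insert x (CB.erase b)))
            = c * ∑ b ∈ CB, B (x :: h) CB b *
              runAux M B T (M x) (x :: h) (insert x (CB.erase b)) := by
          rw [Finset.mul_sum]
          exact Finset.sum_congr rfl fun b _ => by ring
        have hV : ∑ p ∈ CB \ CA, chiF M (T + 1) p (m p) x = S := by
          rw [hS]
          exact Finset.sum_congr rfl fun p hp => by
            have hp' := Finset.mem_sdiff.1 hp
            have hmpA : m p ∈ CA := (Finset.mem_sdiff.1 (hmatch.1 p hp)).1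
            rw [chiF, if_neg (show ¬x = m p from fun he => hxA (he ▸ hmpA)),
              if_neg (show ¬x = p from fun he => hxB (he ▸ hp'.1))]
        rw [hV]
        have hc2 : c * (1 / (2 * (1 - ε))) = c / (2 * (1 - ε)) := by ring
        have hexp : c * (1 + ∑ b ∈ CB, B (x :: h) CB b *
            runAux M B T (M x) (x :: h) (insert x (CB.erase b)))
            = c + c * ∑ b ∈ CB, B (x :: h) CB b *
              runAux M B T (M x) (x :: h) (insert x (CB.erase b)) := by ring
        linarith

    -- assemble
    rw [runAux, runAux]
    calc ∑ x : Fin n, dist x *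
          (if x ∈ CA then runAux M A T (M x) (x :: h) CA
           else 1 + ∑ p ∈ CA, A (x :: h) CA p *
              runAux M A T (M x) (x :: h) (insert x (CA.erase p)))
        ≤ ∑ x : Fin n, dist x *
          (c * (if x ∈ CB then runAux M B T (M x) (x :: h) CB
           else 1 + ∑ p ∈ CB, B (x :: h) CB p *
              runAux M B T (M x) (x :: h) (insert x (CB.erase p)))
          + c * ∑ p ∈ CB \ CA, chiF M (T + 1) p (m p) x) := by
          apply Finset.sum_le_sum
          intro x _
          exact mul_le_mul_of_nonneg_left (key x) (hdist x)
      _ = c * (∑ x : Fin n, dist x *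
          (if x ∈ CB then runAux M B T (M x) (x :: h) CB
           else 1 + ∑ p ∈ CB, B (x :: h) CB p *
              runAux M B T (M x) (x :: h) (insert x (CB.erase p))))
          + c * ∑ p ∈ CB \ CA, ∑ y, dist y * chiF M (T + 1) p (m p) y := by
          have h2 : ∑ x : Fin n, dist x * (∑ p ∈ CB \ CA, chiF M (T + 1) p (m p) x)
              = ∑ p ∈ CB \ CA, ∑ y, dist y * chiF M (T + 1) p (m p) y := by
            simp only [Finset.mul_sum]
            exact Finset.sum_comm
          rw [← h2, Finset.mul_sum, Finset.mul_sum, ← Finset.sum_add_distrib]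
          apply Finset.sum_congr rfl
          intro x _
          ring

end Main

/-- **Theorem (robustness, multiplicative error).**  Let `0 ≤ ε < 1/2` and let `A` be
an online paging policy that at every cache miss evicts from a distribution `μ` with
`∑ p, μ p · α(p<q|s) ≤ 1/(2(1−ε))` for every cached `q`.  Then `A` is
`(2−2ε)/(1−2ε)`-competitive: for every online paging policy `B` started from the same
initial cache and every horizon `T`,
`E[cost(A, T)] ≤ ((2−2ε)/(1−2ε)) · E[cost(B, T)]`. -/
theorem approx_dominating_multiplicative_competitive {n k : ℕ} (hkn : k < n)
    (M : Fin n → Fin n → ℝ) (hM : IsStochastic M)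
    (init : Fin n → ℝ) (hinit : IsDist init)
    (C₀ : Finset (Fin n)) (hC₀ : C₀.card = k)
    (ε : ℝ) (hε : 0 ≤ ε) (hε' : ε < 1 / 2)
    (A : Policy n) (hA : IsMulApproxDomPolicy k M A ε)
    (B : Policy n) (hB : IsPolicy k B) (T : ℕ) :
    expCost M init A C₀ T ≤ ((2 - 2 * ε) / (1 - 2 * ε)) * expCost M init B C₀ T := by
  have h12 : (0:ℝ) < 1 - 2 * ε := by linarith
  have h1e : (0:ℝ) < 1 - ε := by linarith
  set c := (2 - 2 * ε) / (1 - 2 * ε) with hc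
  have hc0 : 0 < c := div_pos (by linarith) h12
  have hcid : 1 + c / (2 * (1 - ε)) = c := by
    rw [hc]
    field_simp
    ring
  have hmatch : MatchesOn id (C₀ \ C₀) (C₀ \ C₀) := by
    rw [Finset.sdiff_self]
    exact ⟨fun p hp => absurd hp (Finset.notMem_empty p),
      fun p hp => absurd hp (Finset.notMem_empty p),
      fun q hq => absurd hq (Finset.notMem_empty q)⟩
  have hmain := main_bound hM hA hB c hc0 hcid T init hinit.1 [] C₀ C₀ id hC₀ hC₀ hmatch
  rw [Finset.sdiff_self, Finset.sum_empty, mul_zero, add_zero] at hmain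
  exact hmain
end

section
/- Under the original charging scheme, at every time each page bears at most one charge from itself and at most one charge from a page other than itself; in particular, no page ever bears more than two charges. -/
open Finset
open scoped Classical

/-! ## The original Lund–Phillips–Reingold charging scheme

We fix an infinite request sequence and fixed runs of an online paging policy `A`
and of an online policy `OPT` on it, both from the same initial cache of size `k`.
Each page `p` carries a value `chg p ∈ Option Page` (`none` = no charge given);
`p` gives a charge to the page `chg p` when `chg p ≠ none`, and that page bears it.
When a page `s` is requested at time `t` the charges are updated in order:
(1) `c(s) := none`;
(2) if `A` misses and evicts `p`: if `p` is not in `OPT`'s cache just after the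
request then `c(p) := p`, otherwise `c(p) := q` for a page `q` of `A`'s cache just
before the request, outside `OPT`'s cache just after it, bearing no charge from any
page of `OPT⁺ \ A⁻`;
(3) if `OPT` evicts `p` then `c(p) := p`. -/

/-- One step of a paging run: on a hit nothing happens, on a miss some cached page `p`
is evicted and the requested page brought in. -/
def CacheStep {Page : Type} [DecidableEq Page] (s : Page) (C C' : Finset Page)
    (ev : Option Page) : Prop :=
  (s ∈ C ∧ ev = none ∧ C' = C) ∨
    (s ∉ C ∧ ∃ p ∈ C, ev = some p ∧ C' = insert s (C.erase p))

/-- Step (1) of the original scheme: when `s` is requested, clear the charge that `s`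
gives. -/
def clearStepOrig {Page : Type} [DecidableEq Page] (s : Page)
    (c : Page → Option Page) : Page → Option Page :=
  fun x => if x = s then none else c x

/-- Step (2): if `A` evicted `p` (cache `CA` just before the request, `OPT`'s cache
`CO` just after it), assign `p`'s charge. -/
def AStep {Page : Type} [DecidableEq Page] (CA CO : Finset Page) (ev : Option Page)
    (c c' : Page → Option Page) : Prop :=
  match ev with
  | none => c' = c
  | some p =>
      (p ∉ CO ∧ c' = Function.update c p (some p)) ∨
        (p ∈ CO ∧ ∃ q ∈ CA, q ∉ CO ∧
          (∀ x ∈ CO, x ∉ CA → c x ≠ some q) ∧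
          c' = Function.update c p (some q))

/-- Step (3): if `OPT` evicted `p`, set `c(p) := p`. -/
def optStep {Page : Type} [DecidableEq Page] (ev : Option Page)
    (c : Page → Option Page) : Page → Option Page :=
  match ev with
  | none => c
  | some p => Function.update c p (some p)

/-- A joint run of the request sequence, of the two paging algorithms `A` and `OPT`
(started from the same initial cache of size `k`), and of the original charging scheme.
`req t` is the page requested at time `t`; `cacheA t`, `cacheOpt t` and `chg t` are the
caches and the charge function just before that request; `evA t`, `evOpt t` are the
pages evicted at time `t` (if any). -/
structure OrigChargingRun (Page : Type) [DecidableEq Page] where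
  k : ℕ
  req : ℕ → Page
  cacheA : ℕ → Finset Page
  cacheOpt : ℕ → Finset Page
  evA : ℕ → Option Page
  evOpt : ℕ → Option Page
  chg : ℕ → Page → Option Page
  init_card : (cacheA 0).card = k
  init_eq : cacheOpt 0 = cacheA 0
  chg_init : ∀ p, chg 0 p = none
  stepA : ∀ t, CacheStep (req t) (cacheA t) (cacheA (t + 1)) (evA t)
  stepOpt : ∀ t, CacheStep (req t) (cacheOpt t) (cacheOpt (t + 1)) (evOpt t)
  chg_step : ∀ t, ∃ c₂, AStep (cacheA t) (cacheOpt (t + 1)) (evA t)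
      (clearStepOrig (req t) (chg t)) c₂ ∧ chg (t + 1) = optStep (evOpt t) c₂

/-
Call `x` an *external charger* of `q` when `x ≠ q` and `x` charges `q`. By induction on time,
every external charger lies in `OPT`'s cache but not in `A`'s, and no page has two external
chargers. A newly created external charge comes from the page `p` just evicted by `A` with
`p` kept by `OPT`; it goes to a page `q` that bears no charge from `OPT⁺ \ A⁻`, and every older
external charger that survives the step lies in `OPT⁺ \ A⁻`, so `q` had none.
-/

section Step

variable {Page : Type} [DecidableEq Page]

namespace CacheStep

variable {s x : Page} {C C' : Finset Page} {ev : Option Page}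

theorem mem_of_mem (h : CacheStep s C C' ev) (hx : x ∈ C) (hev : ev ≠ some x) : x ∈ C' := by
  rcases h with ⟨-, -, rfl⟩ | ⟨-, p, -, rfl, rfl⟩
  · exact hx
  · exact mem_insert_of_mem (mem_erase.2 ⟨fun hxp => hev (hxp ▸ rfl), hx⟩)

theorem notMem_of_notMem (h : CacheStep s C C' ev) (hx : x ∉ C) (hxs : x ≠ s) : x ∉ C' := by
  rcases h with ⟨-, -, rfl⟩ | ⟨-, p, -, -, rfl⟩
  · exact hx
  · simp [hxs, hx]

theorem notMem_of_evict (h : CacheStep s C C' (some x)) : x ∉ C' := by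
  rcases h with ⟨-, h, -⟩ | ⟨hs, p, hp, hev, rfl⟩
  · exact absurd h (Option.some_ne_none x)
  · obtain rfl := Option.some.inj hev
    simp [ne_of_mem_of_not_mem hp hs]

end CacheStep

theorem clearStepOrig_eq_some {s x q : Page} {c : Page → Option Page}
    (h : clearStepOrig s c x = some q) : x ≠ s ∧ c x = some q := by
  unfold clearStepOrig at h
  split_ifs at h with hxs
  exact ⟨hxs, h⟩

theorem optStep_eq_some_of_ne {ev : Option Page} {c : Page → Option Page} {x q : Page}
    (hxq : x ≠ q) (h : optStep ev c x = some q) : ev ≠ some x ∧ c x = some q := by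
  cases ev with
  | none => exact ⟨Option.some_ne_none x ∘ Eq.symm, h⟩
  | some p =>
    have hxp : x ≠ p := by
      rintro rfl
      simp only [optStep, Function.update_self, Option.some.injEq] at h
      exact hxq h
    exact ⟨fun hp => hxp (Option.some.inj hp).symm, by simpa [optStep, hxp] using h⟩

theorem AStep.eq_some_of_ne {CA CO : Finset Page} {ev : Option Page} {c c' : Page → Option Page}
    (hA : AStep CA CO ev c c') {x q : Page} (hxq : x ≠ q) (h : c' x = some q) :
    (ev ≠ some x ∧ c x = some q) ∨
      (ev = some x ∧ x ∈ CO ∧ ∀ y ∈ CO, y ∉ CA → c y ≠ some q) := by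
  cases ev with
  | none => exact Or.inl ⟨Option.some_ne_none x ∘ Eq.symm, hA ▸ h⟩
  | some p =>
    by_cases hxp : x = p
    · subst hxp
      rcases hA with ⟨-, rfl⟩ | ⟨hxCO, q₀, -, -, hfree, rfl⟩
      · simp only [Function.update_self, Option.some.injEq] at h
        exact absurd h hxq
      · obtain rfl : q₀ = q := by simpa using h
        exact Or.inr ⟨rfl, hxCO, hfree⟩
    · have hc' : c' x = c x := by
        rcases hA with ⟨-, rfl⟩ | ⟨-, q₀, -, -, -, rfl⟩ <;> exact Function.update_of_ne hxp _ _
      exact Or.inl ⟨fun hp => hxp (Option.some.inj hp).symm, hc' ▸ h⟩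

structure ChargeInvariant (CA CO : Finset Page) (c : Page → Option Page) : Prop where
  charger_mem : ∀ x q, x ≠ q → c x = some q → x ∈ CO \ CA
  unique : ∀ q x y, x ≠ q → y ≠ q → c x = some q → c y = some q → x = y

namespace ChargeInvariant

variable {s : Page} {CA CO CA' CO' : Finset Page} {evA evO : Option Page}
  {c c₂ : Page → Option Page}

theorem eq_some_step (hinv : ChargeInvariant CA CO c) (hstepA : CacheStep s CA CA' evA)
    (hstepO : CacheStep s CO CO' evO) (hc : AStep CA CO' evA (clearStepOrig s c) c₂)
    {x q : Page} (hxq : x ≠ q) (h : optStep evO c₂ x = some q) :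
    x ∈ CO' \ CA' ∧
      ((x ∉ CA ∧ clearStepOrig s c x = some q) ∨
        (evA = some x ∧ ∀ y ∈ CO', y ∉ CA → clearStepOrig s c y ≠ some q)) := by
  obtain ⟨hevO, h₂⟩ := optStep_eq_some_of_ne hxq h
  rcases hc.eq_some_of_ne hxq h₂ with ⟨hevA, h₁⟩ | ⟨hevA, hxCO', hfree⟩
  · obtain ⟨hxs, h₀⟩ := clearStepOrig_eq_some h₁
    obtain ⟨hxCO, hxCA⟩ := Finset.mem_sdiff.1 (hinv.charger_mem x q hxq h₀)
    exact ⟨Finset.mem_sdiff.2 ⟨hstepO.mem_of_mem hxCO hevO, hstepA.notMem_of_notMem hxCA hxs⟩,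
      Or.inl ⟨hxCA, h₁⟩⟩
  · subst hevA
    exact ⟨Finset.mem_sdiff.2 ⟨hxCO', hstepA.notMem_of_evict⟩, Or.inr ⟨rfl, hfree⟩⟩

theorem step (hinv : ChargeInvariant CA CO c) (hstepA : CacheStep s CA CA' evA)
    (hstepO : CacheStep s CO CO' evO) (hc : AStep CA CO' evA (clearStepOrig s c) c₂) :
    ChargeInvariant CA' CO' (optStep evO c₂) := by
  have classify : ∀ {x q}, x ≠ q → optStep evO c₂ x = some q → _ :=
    hinv.eq_some_step hstepA hstepO hc
  refine ⟨fun x q hxq h => (classify hxq h).1, fun q x y hxq hyq hx hy => ?_⟩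
  obtain ⟨hxCO', -⟩ := Finset.mem_sdiff.1 (classify hxq hx).1
  obtain ⟨hyCO', -⟩ := Finset.mem_sdiff.1 (classify hyq hy).1
  rcases (classify hxq hx).2 with ⟨hxCA, hx₁⟩ | ⟨hevx, hfreex⟩ <;>
    rcases (classify hyq hy).2 with ⟨hyCA, hy₁⟩ | ⟨hevy, hfreey⟩
  · exact hinv.unique q x y hxq hyq (clearStepOrig_eq_some hx₁).2 (clearStepOrig_eq_some hy₁).2
  · exact absurd hx₁ (hfreey x hxCO' hxCA)
  · exact absurd hy₁ (hfreex y hyCO' hyCA)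
  · exact Option.some.inj (hevx.symm.trans hevy)

end ChargeInvariant

theorem OrigChargingRun.chargeInvariant (R : OrigChargingRun Page) (t : ℕ) :
    ChargeInvariant (R.cacheA t) (R.cacheOpt t) (R.chg t) := by
  induction t with
  | zero =>
    exact ⟨fun x q _ h => by simp [R.chg_init] at h, fun q x _ _ _ h => by simp [R.chg_init] at h⟩
  | succ t ih =>
    obtain ⟨c₂, hc, hchg⟩ := R.chg_step t
    exact hchg ▸ ih.step (R.stepA t) (R.stepOpt t) hc

end Step

variable {Page : Type} [DecidableEq Page] [Fintype Page]

/-- **Claim (at most two charges).**  Under the original charging scheme, at every time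
each page bears at most one charge from itself, at most one charge from a page other
than itself; in particular, no page ever bears more than two charges. -/
theorem at_most_two_charges (R : OrigChargingRun Page) (t : ℕ) (p : Page) :
    (univ.filter fun x => x = p ∧ R.chg t x = some p).card ≤ 1 ∧
      (univ.filter fun x => x ≠ p ∧ R.chg t x = some p).card ≤ 1 ∧
      (univ.filter fun x => R.chg t x = some p).card ≤ 2 := by
  have hself : (univ.filter fun x => x = p ∧ R.chg t x = some p).card ≤ 1 :=
    card_le_one.2 fun a ha b hb => by
      rw [(mem_filter.1 ha).2.1, (mem_filter.1 hb).2.1]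
  have hother : (univ.filter fun x => x ≠ p ∧ R.chg t x = some p).card ≤ 1 :=
    card_le_one.2 fun a ha b hb => by
      obtain ⟨-, hap, ha⟩ := mem_filter.1 ha
      obtain ⟨-, hbp, hb⟩ := mem_filter.1 hb
      exact (R.chargeInvariant t).unique p a b hap hbp ha hb
  refine ⟨hself, hother, ?_⟩
  calc (univ.filter fun x => R.chg t x = some p).card
      ≤ ((univ.filter fun x => x = p ∧ R.chg t x = some p) ∪
          univ.filter fun x => x ≠ p ∧ R.chg t x = some p).card :=
        card_le_card fun x hx => by by_cases hxp : x = p <;> simp_all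
    _ ≤ 2 := (card_union_le _ _).trans (by omega)
end
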